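/- Let f_j(x) be the probability that a biased random walk starting at 1 (left with probability x, right with probability 1-x) reaches 0 within j steps, and f(x) = min(1, x/(1-x)) (with f(1) = 1). Then f_j is nondecreasing in j, f_j(x) → f(x) pointwise, and for every ε > 0 there exists k such that for all j > k and all x ∈ (0, 1], f_j(x) > (1-ε) f(x). -/

import Mathlib

/-- Position of the walk after `t` steps: start at 1; each `true` step moves left by 1,
each `false` step moves right by 1. -/
def walkPos (j : ℕ) (ω : Fin j → Bool) (t : ℕ) : ℤ :=
  1 + ∑ i ∈ Finset.univ.filter (fun i : Fin j => (i : ℕ) < t),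
    (if ω i then (-1 : ℤ) else 1)

/-- The walk reaches 0 within `j` steps. -/
def hitsZero (j : ℕ) (ω : Fin j → Bool) : Prop := ∃ t ≤ j, walkPos j ω t = 0

open Classical in
/-- Probability that the walk with independent left-probabilities `p i` hits 0 within
`j` steps. -/
noncomputable def walkHitProb (j : ℕ) (p : Fin j → ℝ) : ℝ :=
  ∑ ω : Fin j → Bool, (∏ i, if ω i then p i else 1 - p i) *
    (if hitsZero j ω then (1 : ℝ) else 0)

/-- f_j(x): probability that the biased walk (left with probability x) started at 1
hits 0 within j steps. -/
noncomputable def fstep (j : ℕ) (x : ℝ) : ℝ := walkHitProb j (fun _ => x)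

/-- The limit hitting probability: f(x) = min(1, x/(1-x)) for x < 1, and f(1) = 1. -/
noncomputable def fLim (x : ℝ) : ℝ := if x = 1 then 1 else min 1 (x / (1 - x))

/-!
Let `hitProb n j x` be the probability of reaching `0` within `j` steps from height `n`, so that
`f_j = hitProb 1 j`. First-step analysis gives
`hitProb (n + 1) (j + 1) = x · hitProb n j + (1 - x) · hitProb (n + 2) j`, from which
`hitProb n j` is nondecreasing in `j`, is bounded by `rⁿ` for every nonnegative fixed point `r` of
`r ↦ x + (1 - x) r²` (namely `r = 1` and `r = x / (1 - x)`), and is supermultiplicative: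
`hitProb m a · hitProb n b ≤ hitProb (m + n) (a + b)`. Hence the limit `L` of `f_j x` satisfies
`L ≤ min 1 (x / (1 - x))` and `x + (1 - x) L² ≤ L`, which force `L = f x`.

Since `f` is continuous on `[0, 1]`, Dini's theorem makes the convergence uniform there; this gives
the relative bound for `x ≥ ε / 2`, while for small `x` it follows from `x ≤ f_j x` and
`(1 - x) f x ≤ x`.
-/

open Filter Topology Set

def walkPosFrom (n : ℤ) (j : ℕ) (ω : Fin j → Bool) (t : ℕ) : ℤ :=
  n + ∑ i ∈ Finset.univ.filter (fun i : Fin j => (i : ℕ) < t),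
    (if ω i then (-1 : ℤ) else 1)

def hitsZeroFrom (n : ℤ) (j : ℕ) (ω : Fin j → Bool) : Prop :=
  ∃ t ≤ j, walkPosFrom n j ω t = 0

def pathWeight (x : ℝ) {j : ℕ} (ω : Fin j → Bool) : ℝ :=
  ∏ i, if ω i then x else 1 - x

open Classical in
noncomputable def walkHitProbFrom (n : ℤ) (j : ℕ) (x : ℝ) : ℝ :=
  ∑ ω : Fin j → Bool, pathWeight x ω * if hitsZeroFrom n j ω then (1 : ℝ) else 0

lemma walkPosFrom_zero (n : ℤ) (j : ℕ) (ω : Fin j → Bool) : walkPosFrom n j ω 0 = n := by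
  simp [walkPosFrom]

lemma walkPosFrom_cons_succ (n : ℤ) (j : ℕ) (b : Bool) (ω : Fin j → Bool) (t : ℕ) :
    walkPosFrom n (j + 1) (Fin.cons b ω) (t + 1) =
      walkPosFrom (n + if b then -1 else 1) j ω t := by
  simp only [walkPosFrom, Finset.sum_filter, Fin.sum_univ_succ, Fin.cons_zero, Fin.cons_succ,
    Fin.val_zero, Fin.val_succ, Nat.zero_lt_succ, if_true, Nat.add_lt_add_iff_right]
  ring

lemma hitsZeroFrom_cons (n : ℤ) (j : ℕ) (b : Bool) (ω : Fin j → Bool) :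
    hitsZeroFrom n (j + 1) (Fin.cons b ω) ↔
      n = 0 ∨ hitsZeroFrom (n + if b then -1 else 1) j ω := by
  constructor
  · rintro ⟨_ | t, ht, hzero⟩
    · exact .inl (by rwa [walkPosFrom_zero] at hzero)
    · exact .inr ⟨t, by omega, by rwa [walkPosFrom_cons_succ] at hzero⟩
  · rintro (rfl | ⟨t, ht, hzero⟩)
    · exact ⟨0, Nat.zero_le _, walkPosFrom_zero _ _ _⟩
    · exact ⟨t + 1, by omega, by rwa [walkPosFrom_cons_succ]⟩

lemma sum_fun_fin_succ {β M : Type*} [Fintype β] [AddCommMonoid M] (j : ℕ)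
    (g : (Fin (j + 1) → β) → M) :
    ∑ ω, g ω = ∑ b, ∑ ω : Fin j → β, g (Fin.cons b ω) := by
  rw [← (Fin.consEquiv fun _ => β).sum_comp g, Fintype.sum_prod_type]
  rfl

lemma pathWeight_cons (x : ℝ) {j : ℕ} (b : Bool) (ω : Fin j → Bool) :
    pathWeight x (Fin.cons b ω : Fin (j + 1) → Bool) =
      (if b then x else 1 - x) * pathWeight x ω := by
  simp [pathWeight, Fin.prod_univ_succ]

lemma sum_pathWeight (x : ℝ) (j : ℕ) : ∑ ω : Fin j → Bool, pathWeight x ω = 1 := by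
  simpa [pathWeight] using
    (Fintype.prod_sum fun (_ : Fin j) (b : Bool) => if b then x else 1 - x).symm

lemma walkHitProbFrom_zero_left (j : ℕ) (x : ℝ) : walkHitProbFrom 0 j x = 1 := by
  have hits (ω : Fin j → Bool) : hitsZeroFrom 0 j ω :=
    ⟨0, Nat.zero_le _, walkPosFrom_zero ..⟩
  simp [walkHitProbFrom, hits, sum_pathWeight]

lemma walkHitProbFrom_zero_right (n : ℤ) (x : ℝ) :
    walkHitProbFrom n 0 x = if n = 0 then 1 else 0 := by
  classical
  have hits (ω : Fin 0 → Bool) : hitsZeroFrom n 0 ω ↔ n = 0 := by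
    simp [hitsZeroFrom, walkPosFrom_zero]
  simp only [walkHitProbFrom, Fintype.sum_unique, pathWeight, Finset.univ_eq_empty,
    Finset.prod_empty, one_mul, hits]

lemma walkHitProbFrom_succ {n : ℤ} (hn : n ≠ 0) (j : ℕ) (x : ℝ) :
    walkHitProbFrom n (j + 1) x =
      x * walkHitProbFrom (n - 1) j x + (1 - x) * walkHitProbFrom (n + 1) j x := by
  classical
  simp only [walkHitProbFrom, sum_fun_fin_succ, Fintype.sum_bool, pathWeight_cons]
  simp only [hitsZeroFrom_cons, hn, false_or, Finset.mul_sum, if_true, Bool.false_eq_true,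
    if_false, mul_assoc, ← sub_eq_add_neg]

noncomputable def hitProb : ℕ → ℕ → ℝ → ℝ
  | 0, _, _ => 1
  | _ + 1, 0, _ => 0
  | n + 1, j + 1, x => x * hitProb n j x + (1 - x) * hitProb (n + 2) j x

lemma hitProb_zero_left (j : ℕ) (x : ℝ) : hitProb 0 j x = 1 := by
  cases j <;> rfl

lemma hitProb_succ_zero (n : ℕ) (x : ℝ) : hitProb (n + 1) 0 x = 0 := rfl

lemma hitProb_succ_succ (n j : ℕ) (x : ℝ) :
    hitProb (n + 1) (j + 1) x = x * hitProb n j x + (1 - x) * hitProb (n + 2) j x := rfl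

lemma walkHitProbFrom_natCast (n j : ℕ) (x : ℝ) : walkHitProbFrom n j x = hitProb n j x := by
  induction j generalizing n with
  | zero =>
    cases n with
    | zero => simp [walkHitProbFrom_zero_left, hitProb_zero_left]
    | succ m => simp [walkHitProbFrom_zero_right, hitProb_succ_zero, Nat.cast_add_one_ne_zero]
  | succ j ih =>
    cases n with
    | zero => simp [walkHitProbFrom_zero_left, hitProb_zero_left]
    | succ m =>
      rw [walkHitProbFrom_succ (by positivity), hitProb_succ_succ, ← ih, ← ih]
      push_cast
      ring_nf

lemma fstep_eq_hitProb (j : ℕ) (x : ℝ) : fstep j x = hitProb 1 j x := by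
  rw [← walkHitProbFrom_natCast]
  rfl

section hitProb

variable {x : ℝ}

lemma hitProb_nonneg (hx0 : 0 ≤ x) (hx1 : x ≤ 1) (n j : ℕ) : 0 ≤ hitProb n j x := by
  induction j generalizing n with
  | zero => cases n <;> simp [hitProb_zero_left, hitProb_succ_zero]
  | succ j ih =>
    cases n with
    | zero => simp [hitProb_zero_left]
    | succ m =>
      rw [hitProb_succ_succ]
      have := ih m
      have := ih (m + 2)
      have : 0 ≤ 1 - x := by linarith
      positivity

lemma hitProb_le_pow_of_fixedPoint (hx0 : 0 ≤ x) (hx1 : x ≤ 1) {r : ℝ} (hr : 0 ≤ r)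
    (hfix : x + (1 - x) * r ^ 2 = r) (n j : ℕ) : hitProb n j x ≤ r ^ n := by
  induction j generalizing n with
  | zero => cases n <;> simp [hitProb_zero_left, hitProb_succ_zero, hr]
  | succ j ih =>
    cases n with
    | zero => simp [hitProb_zero_left]
    | succ m =>
      have h1x : 0 ≤ 1 - x := by linarith
      calc hitProb (m + 1) (j + 1) x
          ≤ x * r ^ m + (1 - x) * r ^ (m + 2) := by
            rw [hitProb_succ_succ]; gcongr <;> exact ih _
        _ = r ^ (m + 1) := by linear_combination r ^ m * hfix

lemma hitProb_le_one (hx0 : 0 ≤ x) (hx1 : x ≤ 1) (n j : ℕ) : hitProb n j x ≤ 1 := by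
  simpa using hitProb_le_pow_of_fixedPoint hx0 hx1 zero_le_one (by ring) n j

lemma hitProb_le_succ (hx0 : 0 ≤ x) (hx1 : x ≤ 1) (n j : ℕ) :
    hitProb n j x ≤ hitProb n (j + 1) x := by
  induction j generalizing n with
  | zero =>
    cases n with
    | zero => simp [hitProb_zero_left]
    | succ m => simpa [hitProb_succ_zero] using hitProb_nonneg hx0 hx1 (m + 1) 1
  | succ j ih =>
    cases n with
    | zero => simp [hitProb_zero_left]
    | succ m =>
      have h1x : 0 ≤ 1 - x := by linarith
      rw [hitProb_succ_succ, hitProb_succ_succ]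
      gcongr <;> exact ih _

lemma monotone_hitProb (hx0 : 0 ≤ x) (hx1 : x ≤ 1) (n : ℕ) :
    Monotone fun j => hitProb n j x :=
  monotone_nat_of_le_succ (hitProb_le_succ hx0 hx1 n)

/-- To reach `0` from `m + n`, it suffices to descend `m` levels within `a` steps and then `n`
further levels within `b` steps. -/
lemma hitProb_mul_hitProb_le (hx0 : 0 ≤ x) (hx1 : x ≤ 1) (m n a b : ℕ) :
    hitProb m a x * hitProb n b x ≤ hitProb (m + n) (a + b) x := by
  have hn := hitProb_nonneg hx0 hx1 n b
  induction a generalizing m with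
  | zero =>
    cases m with
    | zero => simp [hitProb_zero_left]
    | succ m => simpa [hitProb_succ_zero] using hitProb_nonneg hx0 hx1 _ _
  | succ a ih =>
    cases m with
    | zero =>
      simpa [hitProb_zero_left] using monotone_hitProb hx0 hx1 n (Nat.le_add_left b (a + 1))
    | succ m =>
      have h1x : 0 ≤ 1 - x := by linarith
      rw [show m + 1 + n = (m + n) + 1 by omega, show a + 1 + b = (a + b) + 1 by omega,
        hitProb_succ_succ, hitProb_succ_succ]
      calc (x * hitProb m a x + (1 - x) * hitProb (m + 2) a x) * hitProb n b x
          = x * (hitProb m a x * hitProb n b x)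
            + (1 - x) * (hitProb (m + 2) a x * hitProb n b x) := by ring
        _ ≤ x * hitProb (m + n) (a + b) x + (1 - x) * hitProb (m + n + 2) (a + b) x := by
          gcongr
          · exact ih m
          · simpa [show m + 2 + n = m + n + 2 by omega] using ih (m + 2)

lemma continuous_hitProb (n j : ℕ) : Continuous (hitProb n j) := by
  induction j generalizing n with
  | zero => cases n <;> exact continuous_const
  | succ j ih =>
    cases n with
    | zero => exact continuous_const
    | succ m =>
      have := ih m
      have := ih (m + 2)
      show Continuous fun x => x * hitProb m j x + (1 - x) * hitProb (m + 2) j x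
      fun_prop

end hitProb

section fstep

variable {x : ℝ}

lemma monotone_fstep (hx0 : 0 ≤ x) (hx1 : x ≤ 1) : Monotone fun j => fstep j x := by
  simpa only [fstep_eq_hitProb] using monotone_hitProb hx0 hx1 1

lemma continuous_fstep (j : ℕ) : Continuous (fstep j) := by
  simpa only [funext (fstep_eq_hitProb j)] using continuous_hitProb 1 j

lemma self_le_fstep (hx0 : 0 ≤ x) (hx1 : x ≤ 1) {j : ℕ} (hj : j ≠ 0) : x ≤ fstep j x := by
  obtain ⟨j, rfl⟩ := Nat.exists_eq_succ_of_ne_zero hj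
  rw [fstep_eq_hitProb, hitProb_succ_succ, hitProb_zero_left]
  nlinarith [hitProb_nonneg hx0 hx1 2 j]

/-- First-step decomposition: a first step down hits `0`; after a first step up, the walk has
to descend two levels. -/
lemma self_add_mul_fstep_mul_fstep_le (hx0 : 0 ≤ x) (hx1 : x ≤ 1) (a b : ℕ) :
    x + (1 - x) * (fstep a x * fstep b x) ≤ fstep (a + b + 1) x := by
  rw [fstep_eq_hitProb, fstep_eq_hitProb, fstep_eq_hitProb, hitProb_succ_succ, hitProb_zero_left]
  have h1x : 0 ≤ 1 - x := by linarith
  gcongr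
  · exact le_of_eq (mul_one x).symm
  · exact hitProb_mul_hitProb_le hx0 hx1 1 1 a b

lemma fLim_of_lt_one (hx1 : x < 1) : fLim x = min 1 (x / (1 - x)) := if_neg hx1.ne

lemma fstep_le_fLim (hx0 : 0 ≤ x) (hx1 : x ≤ 1) (j : ℕ) : fstep j x ≤ fLim x := by
  rcases hx1.lt_or_eq with hx1 | rfl
  · have h1x : 0 < 1 - x := by linarith
    rw [fLim_of_lt_one hx1, fstep_eq_hitProb]
    refine le_min (hitProb_le_one hx0 hx1.le 1 j) ?_
    have hfix : x + (1 - x) * (x / (1 - x)) ^ 2 = x / (1 - x) := by field_simp; ring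
    simpa using hitProb_le_pow_of_fixedPoint hx0 hx1.le (by positivity) hfix 1 j
  · simpa [fLim] using (fstep_eq_hitProb j 1).trans_le (hitProb_le_one zero_le_one le_rfl 1 j)

/-- `x + (1 - x) L² - L = ((1 - x) L - x) (L - 1)`, so `L` lies between the roots `x / (1 - x)`
and `1`. -/
lemma fLim_le_of_self_add_mul_sq_le (hx1 : x ≤ 1) {L : ℝ} (h : x + (1 - x) * L ^ 2 ≤ L) :
    fLim x ≤ L := by
  rcases hx1.lt_or_eq with hx1 | rfl
  · rw [fLim_of_lt_one hx1]
    rcases le_or_gt 1 L with hL | hL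
    · exact min_le_of_left_le hL
    · refine min_le_of_right_le ((div_le_iff₀ (by linarith)).2 ?_)
      nlinarith
  · simpa [fLim] using h

lemma tendsto_fstep_fLim (hx0 : 0 ≤ x) (hx1 : x ≤ 1) :
    Tendsto (fun j => fstep j x) atTop (𝓝 (fLim x)) := by
  have hbdd : BddAbove (range fun j => fstep j x) :=
    ⟨fLim x, forall_mem_range.2 (fstep_le_fLim hx0 hx1)⟩
  have hL := tendsto_atTop_ciSup (monotone_fstep hx0 hx1) hbdd
  set L := ⨆ j, fstep j x
  suffices L = fLim x by rwa [← this]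
  refine le_antisymm (ciSup_le (fstep_le_fLim hx0 hx1)) (fLim_le_of_self_add_mul_sq_le hx1 ?_)
  have hdiag : Tendsto (fun j => fstep (j + j + 1) x) atTop (𝓝 L) :=
    hL.comp (tendsto_atTop_mono (fun j => show j ≤ j + j + 1 by omega) tendsto_id)
  have hsq : Tendsto (fun j => x + (1 - x) * (fstep j x * fstep j x)) atTop
      (𝓝 (x + (1 - x) * L ^ 2)) := by
    simpa [sq] using (hL.mul hL).const_mul (1 - x) |>.const_add x
  exact le_of_tendsto_of_tendsto' hsq hdiag fun j => self_add_mul_fstep_mul_fstep_le hx0 hx1 j j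

end fstep

section fLim

variable {x : ℝ}

/-- Without the case split at `x = 1`, continuity on `[0, 1]` is evident. -/
lemma fLim_eq_div_max (hx0 : 0 ≤ x) (hx1 : x ≤ 1) : fLim x = x / max x (1 - x) := by
  rcases hx1.lt_or_eq with hx1 | rfl
  · rw [fLim_of_lt_one hx1]
    rcases le_total x (1 - x) with hle | hle
    · rw [max_eq_right hle, min_eq_right ((div_le_one (by linarith)).2 hle)]
    · rw [max_eq_left hle, div_self (by linarith), min_eq_left ((one_le_div (by linarith)).2 hle)]
  · norm_num [fLim]

lemma max_self_one_sub_pos (y : ℝ) : 0 < max y (1 - y) :=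
  lt_max_iff.2 (by by_contra! h; linarith [h.1, h.2])

lemma continuousOn_fLim : ContinuousOn fLim (Icc 0 1) :=
  (continuous_id.div (by fun_prop) fun y => (max_self_one_sub_pos y).ne').continuousOn.congr
    fun _ hy => fLim_eq_div_max hy.1 hy.2

lemma self_le_fLim (hx0 : 0 ≤ x) (hx1 : x ≤ 1) : x ≤ fLim x := by
  rw [fLim_eq_div_max hx0 hx1]
  exact le_div_self hx0 (max_self_one_sub_pos x) (max_le hx1 (by linarith))

lemma one_sub_mul_fLim_le (hx0 : 0 ≤ x) (hx1 : x ≤ 1) : (1 - x) * fLim x ≤ x := by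
  rcases hx1.lt_or_eq with hx1 | rfl
  · have hle : fLim x ≤ x / (1 - x) := (fLim_of_lt_one hx1).trans_le (min_le_right _ _)
    calc (1 - x) * fLim x ≤ (1 - x) * (x / (1 - x)) := by gcongr
      _ = x := mul_div_cancel₀ x (by linarith)
  · norm_num

lemma tendstoUniformlyOn_fstep_fLim : TendstoUniformlyOn fstep fLim atTop (Icc 0 1) :=
  Monotone.tendstoUniformlyOn_of_forall_tendsto isCompact_Icc
    (fun j => (continuous_fstep j).continuousOn) (fun _ hx => monotone_fstep hx.1 hx.2)
    continuousOn_fLim (fun _ hx => tendsto_fstep_fLim hx.1 hx.2)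

end fLim

/-- f_j is nondecreasing in j, converges pointwise to f on (0,1], and for every ε > 0
there is k such that f_j(x) > (1-ε)·f(x) for all j > k and all x ∈ (0,1]. -/
theorem walk_hitting_uniform_convergence :
    (∀ x ∈ Set.Icc (0 : ℝ) 1, Monotone fun j => fstep j x) ∧
      (∀ x ∈ Set.Ioc (0 : ℝ) 1,
        Filter.Tendsto (fun j => fstep j x) Filter.atTop (nhds (fLim x))) ∧
      (∀ ε : ℝ, 0 < ε → ∃ k : ℕ, ∀ j > k, ∀ x ∈ Set.Ioc (0 : ℝ) 1,
        (1 - ε) * fLim x < fstep j x) := by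
  refine ⟨fun x hx => monotone_fstep hx.1 hx.2, fun x hx => tendsto_fstep_fLim hx.1.le hx.2,
    fun ε hε => ?_⟩
  obtain ⟨k, hk⟩ := eventually_atTop.1 <|
    Metric.tendstoUniformlyOn_iff.1 tendstoUniformlyOn_fstep_fLim (ε * (ε / 2)) (by positivity)
  refine ⟨k, fun j hj x ⟨hx0, hx1⟩ => ?_⟩
  have hxf := self_le_fLim hx0.le hx1
  rcases lt_or_ge x (ε / 2) with hsmall | hlarge
  · calc (1 - ε) * fLim x < (1 - x) * fLim x := by
          apply mul_lt_mul_of_pos_right <;> linarith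
      _ ≤ x := one_sub_mul_fLim_le hx0.le hx1
      _ ≤ fstep j x := self_le_fstep hx0.le hx1 (by omega)
  · have hdist := hk j hj.le x ⟨hx0.le, hx1⟩
    rw [Real.dist_eq, abs_of_nonneg (sub_nonneg.2 (fstep_le_fLim hx0.le hx1 j))] at hdist
    calc (1 - ε) * fLim x = fLim x - ε * fLim x := by ring
      _ ≤ fLim x - ε * (ε / 2) := by gcongr; linarith
      _ < fstep j x := by linarith
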